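/- arXiv:1808.10056 — 3 statements merged into one kernel-verified Lean document; each statement's English description precedes it below -/
import Mathlib

section
/- For any hypothesized probability densities P_0, P_1 on the reals with A = sup_x log(P_1(x)/P_0(x)) − inf_{x'} log(P_1(x')/P_0(x')) finite, any privacy parameter ε > 0, any database size n, any pair of neighboring databases X, X' ∈ ℝ^n (differing in exactly one entry), and any index i ∈ {1,…,n}: if Z_1,…,Z_n are independent Laplace(A/ε) random variables, ℓ(k,X) = Σ_{j=k}^n log(P_1(x_j)/P_0(x_j)), and k̃(X) = argmax_{1≤k≤n} (ℓ(k,X) + Z_k), then Pr[k̃(X) = i] ≤ e^ε · Pr[k̃(X') = i]. (That is, OfflinePCPD with δ = 0 is (ε,0)-differentially private.) -/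
open MeasureTheory ProbabilityTheory

/-- The measure on `ℝ` with density `P` with respect to Lebesgue measure. -/
noncomputable def densityMeasure (P : ℝ → ℝ) : Measure ℝ :=
  volume.withDensity fun x => ENNReal.ofReal (P x)

/-- The Laplace distribution with scale `b`, with density `(1/(2b)) exp (-|x|/b)`. -/
noncomputable def laplaceMeasure (b : ℝ) : Measure ℝ :=
  volume.withDensity fun x => ENNReal.ofReal (Real.exp (-|x| / b) / (2 * b))

/-- `P` is a probability density on `ℝ`. -/
structure IsDensity (P : ℝ → ℝ) : Prop where
  measurable : Measurable P
  nonneg : ∀ x, 0 ≤ P x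
  integral_one : ∫ x, P x = 1

open Set
open scoped ENNReal

/-! Relative to the candidate `i`, the scores of `X'` exceed those of `X` by at most the
sensitivity `A`. Let `M` be the best noisy score of `X` relative to `i` among the other
candidates; it is independent of `Z_i`. If `X` selects `i` then `M ≤ Z_i`, and if `M + A < Z_i`
then `X'` selects `i`. Shifting the `Lap(A/ε)` density by `A` changes it by a factor at most
`e^ε`, so `Pr[M ≤ Z_i] ≤ e^ε Pr[M + A < Z_i]`. -/

theorem pos_of_laplaceMeasure_ne_zero {b : ℝ} (h : laplaceMeasure b ≠ 0) : 0 < b := by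
  contrapose! h
  have hdens : (fun x : ℝ => ENNReal.ofReal (Real.exp (-|x| / b) / (2 * b))) = 0 := by
    funext x
    exact ENNReal.ofReal_of_nonpos
      (div_nonpos_of_nonneg_of_nonpos (Real.exp_nonneg _) (by linarith))
  rw [laplaceMeasure, hdens, withDensity_zero]

theorem laplaceMeasure_Ici_le {b A : ℝ} (hb : 0 < b) (hA : 0 ≤ A) (m : ℝ) :
    laplaceMeasure b (Ici m)
      ≤ ENNReal.ofReal (Real.exp (A / b)) * laplaceMeasure b (Ioi (m + A)) := by
  set f : ℝ → ℝ≥0∞ := fun x => ENNReal.ofReal (Real.exp (-|x| / b) / (2 * b))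
  have hshift : ∀ x, f x ≤ ENNReal.ofReal (Real.exp (A / b)) * f (x + A) := by
    intro x
    simp only [f]
    rw [← ENNReal.ofReal_mul (Real.exp_nonneg _), ← mul_div_assoc, ← Real.exp_add]
    gcongr
    rw [← add_div, neg_div, le_div_iff₀ hb, neg_mul, div_mul_cancel₀ _ hb.ne']
    linarith [abs_add_le x A, abs_of_nonneg hA]
  have hsubst : ∫⁻ x in Ioi m, f (x + A) = ∫⁻ y in Ioi (m + A), f y := by
    have := (measurePreserving_add_right volume A).setLIntegral_comp_preimage_emb
      (measurableEmbedding_addRight A) f (Ioi (m + A))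
    rwa [preimage_add_const_Ioi, add_sub_cancel_right] at this
  have : NullSingletonClass (laplaceMeasure b) := by unfold laplaceMeasure; infer_instance
  calc laplaceMeasure b (Ici m) = ∫⁻ x in Ioi m, f x := by
        rw [← measure_congr Ioi_ae_eq_Ici, laplaceMeasure, withDensity_apply _ measurableSet_Ioi]
    _ ≤ ∫⁻ x in Ioi m, ENNReal.ofReal (Real.exp (A / b)) * f (x + A) := lintegral_mono hshift
    _ = ENNReal.ofReal (Real.exp (A / b)) * ∫⁻ x in Ioi m, f (x + A) :=
        lintegral_const_mul' _ _ ENNReal.ofReal_ne_top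
    _ = _ := by rw [hsubst, laplaceMeasure, withDensity_apply _ measurableSet_Ioi]

theorem ProbabilityTheory.IndepFun.measure_le_le_mul_measure_add_lt
    {Ω : Type*} [MeasurableSpace Ω] {P : Measure Ω} [IsFiniteMeasure P]
    {M Y : Ω → ℝ} (hM : Measurable M) (hY : Measurable Y) (hMY : IndepFun M Y P)
    {A : ℝ} {C : ℝ≥0∞} (hshift : ∀ m, P.map Y (Ici m) ≤ C * P.map Y (Ioi (m + A))) :
    P {ω | M ω ≤ Y ω} ≤ C * P {ω | M ω + A < Y ω} := by
  have hprod : P.map (fun ω => (M ω, Y ω)) = (P.map M).prod (P.map Y) :=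
    (indepFun_iff_map_prod_eq_prod_map_map hM.aemeasurable hY.aemeasurable).mp hMY
  have hle : MeasurableSet {p : ℝ × ℝ | p.1 ≤ p.2} :=
    measurableSet_le measurable_fst measurable_snd
  have hlt : MeasurableSet {p : ℝ × ℝ | p.1 + A < p.2} :=
    measurableSet_lt (measurable_fst.add_const A) measurable_snd
  calc P {ω | M ω ≤ Y ω} = (P.map M).prod (P.map Y) {p | p.1 ≤ p.2} := by
        rw [← hprod, Measure.map_apply (hM.prodMk hY) hle]; rfl
    _ = ∫⁻ m, P.map Y (Ici m) ∂P.map M := Measure.prod_apply hle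
    _ ≤ ∫⁻ m, C * P.map Y (Ioi (m + A)) ∂P.map M := lintegral_mono hshift
    _ = C * ∫⁻ m, P.map Y (Ioi (m + A)) ∂P.map M :=
        lintegral_const_mul C (measurable_measure_prodMk_left hlt)
    _ = C * (P.map M).prod (P.map Y) {p | p.1 + A < p.2} := by rw [Measure.prod_apply hlt]; rfl
    _ = C * P {ω | M ω + A < Y ω} := by
        rw [← hprod, Measure.map_apply (hM.prodMk hY) hlt]; rfl

theorem ProbabilityTheory.iIndepFun.indepFun_sup'_add {Ω ι : Type*} [MeasurableSpace Ω]
    {P : Measure Ω} {Z : ι → Ω → ℝ} (hZ : ∀ k, Measurable (Z k)) (hind : iIndepFun Z P)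
    {s : Finset ι} (hs : s.Nonempty) {i : ι} (hi : i ∉ s) (c : ι → ℝ) :
    IndepFun (fun ω => s.sup' hs fun k => c k + Z k ω) (Z i) P := by
  classical
  have hvec := hind.indepFun_finset s {i} (Finset.disjoint_singleton_right.mpr hi) hZ
  have hψ : Measurable fun v : s → ℝ => s.attach.sup' hs.attach fun k => c k + v k := by
    fun_prop
  have hM : (fun ω => s.sup' hs fun k => c k + Z k ω)
      = (fun v : s → ℝ => s.attach.sup' hs.attach fun k => c k + v k) ∘ fun ω k => Z k ω :=
    funext fun ω =>
      (Finset.sup'_congr hs Finset.attach_map_val.symm fun _ _ => rfl).trans (Finset.sup'_map _ _)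
  rw [hM]
  exact hvec.comp hψ (measurable_pi_apply ⟨i, Finset.mem_singleton_self i⟩)

theorem measure_argmax_eq_le_exp_mul {Ω ι : Type*} [MeasurableSpace Ω] [Fintype ι]
    [DecidableEq ι] {P : Measure Ω} {Z : ι → Ω → ℝ} (hZ : ∀ k, Measurable (Z k))
    (hind : iIndepFun Z P)
    {b A : ℝ} (hb : 0 < b) (hA : 0 ≤ A) {i : ι} (hZi : P.map (Z i) = laplaceMeasure b)
    {c c' : ι → ℝ} (hsens : ∀ k, c' k - c' i ≤ c k - c i + A)
    {K K' : Ω → ι} (hK : ∀ ω k, c k + Z k ω ≤ c (K ω) + Z (K ω) ω)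
    (hK' : ∀ ω k, c' k + Z k ω ≤ c' (K' ω) + Z (K' ω) ω) :
    P {ω | K ω = i} ≤ ENNReal.ofReal (Real.exp (A / b)) * P {ω | K' ω = i} := by
  rcases (Finset.univ.erase i).eq_empty_or_nonempty with hempty | hs
  · have hK'i : {ω | K' ω = i} = univ := eq_univ_of_forall fun ω => by
      by_contra hne
      simpa [hempty] using Finset.mem_erase.mpr ⟨hne, Finset.mem_univ (K' ω)⟩
    have hexp : 1 ≤ ENNReal.ofReal (Real.exp (A / b)) :=
      ENNReal.one_le_ofReal.mpr (Real.one_le_exp (by positivity))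
    calc P {ω | K ω = i} ≤ 1 * P {ω | K' ω = i} := by
          rw [one_mul, hK'i]; exact measure_mono (subset_univ _)
      _ ≤ _ := by gcongr
  set M : Ω → ℝ := fun ω => (Finset.univ.erase i).sup' hs fun k => c k - c i + Z k ω
  have hM : Measurable M := by fun_prop
  have := hind.isProbabilityMeasure
  calc P {ω | K ω = i} ≤ P {ω | M ω ≤ Z i ω} := by
        refine measure_mono fun ω (hω : K ω = i) => show M ω ≤ Z i ω from ?_
        exact Finset.sup'_le _ _ fun k _ => by linarith [hω ▸ hK ω k]
    _ ≤ ENNReal.ofReal (Real.exp (A / b)) * P {ω | M ω + A < Z i ω} :=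
        (hind.indepFun_sup'_add hZ hs (Finset.notMem_erase i _) _).measure_le_le_mul_measure_add_lt
          hM (hZ i) fun m => hZi ▸ laplaceMeasure_Ici_le hb hA m
    _ ≤ ENNReal.ofReal (Real.exp (A / b)) * P {ω | K' ω = i} := by
        refine mul_le_mul_right (measure_mono fun ω (hω : M ω + A < Z i ω) => ?_) _
        by_contra hne
        have hle : c (K' ω) - c i + Z (K' ω) ω ≤ M ω := Finset.le_sup'
          (fun k => c k - c i + Z k ω) (Finset.mem_erase.mpr ⟨hne, Finset.mem_univ _⟩)
        linarith [hK' ω i, hsens (K' ω)]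

theorem ProbabilityTheory.iIndepFun.Icc_one_of_fin {Ω β : Type*} [MeasurableSpace Ω]
    [MeasurableSpace β] {P : Measure Ω} {n : ℕ} {Z : ℕ → Ω → β}
    (h : iIndepFun (fun k : Fin n => Z (k + 1)) P) :
    iIndepFun (fun k : Finset.Icc 1 n => Z k) P := by
  have hlt (k : Finset.Icc 1 n) : (k : ℕ) - 1 < n := by
    have := Finset.mem_Icc.mp k.2; omega
  have hinj : Function.Injective fun k : Finset.Icc 1 n => (⟨k - 1, hlt k⟩ : Fin n) := by
    intro k l hkl
    have := Finset.mem_Icc.mp k.2; have := Finset.mem_Icc.mp l.2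
    simp only [Fin.mk.injEq] at hkl
    exact Subtype.ext (by omega)
  convert h.precomp hinj with k
  have := Finset.mem_Icc.mp k.2
  simp only
  omega

theorem Finset.sum_sub_sum_eq_ite {ι G : Type*} [AddCommGroup G] [DecidableEq ι] {s : Finset ι}
    {f f' : ι → G} {j : ι} (h : ∀ x ∈ s, x ≠ j → f x = f' x) :
    ∑ x ∈ s, f x - ∑ x ∈ s, f' x = if j ∈ s then f j - f' j else 0 := by
  rw [← sum_sub_distrib]
  split_ifs with hj
  · exact sum_eq_single_of_mem j hj fun x hx hxj => by rw [h x hx hxj, sub_self]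
  · exact sum_eq_zero fun x hx => by rw [h x hx (ne_of_mem_of_not_mem hx hj), sub_self]

theorem Finset.sum_sub_sum_le_sum_sub_sum_add {ι : Type*} {s t : Finset ι} {f f' : ι → ℝ}
    {j : ι} {A : ℝ} (hs : ∀ x ∈ s, x ≠ j → f x = f' x)
    (ht : ∀ x ∈ t, x ≠ j → f x = f' x)
    (hj : |f j - f' j| ≤ A) :
    ∑ x ∈ s, f' x - ∑ x ∈ t, f' x ≤ ∑ x ∈ s, f x - ∑ x ∈ t, f x + A := by
  classical
  have hs' := sum_sub_sum_eq_ite hs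
  have ht' := sum_sub_sum_eq_ite ht
  rw [abs_le] at hj
  split_ifs at hs' ht' <;> linarith

theorem abs_sub_le_sSup_sub_sInf {α : Type*} {g : α → ℝ} (ha : BddAbove (range g))
    (hb : BddBelow (range g)) (x y : α) :
    |g x - g y| ≤ sSup (range g) - sInf (range g) := by
  have hx := le_csSup ha (mem_range_self x)
  have hy := le_csSup ha (mem_range_self y)
  have hx' := csInf_le hb (mem_range_self x)
  have hy' := csInf_le hb (mem_range_self y)
  rw [abs_sub_le_iff]
  constructor <;> linarith

theorem offlinePCPD_privacy_general
    {Ω : Type*} [MeasurableSpace Ω] (Prb : Measure Ω)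
    (P₀ P₁ : ℝ → ℝ)
    (hbddAbove : BddAbove (Set.range fun x => Real.log (P₁ x / P₀ x)))
    (hbddBelow : BddBelow (Set.range fun x => Real.log (P₁ x / P₀ x)))
    (A : ℝ)
    (hA : A = sSup (Set.range fun x => Real.log (P₁ x / P₀ x))
            - sInf (Set.range fun x => Real.log (P₁ x / P₀ x)))
    (ε : ℝ) (hε : 0 < ε)
    (n : ℕ)
    (X X' : ℕ → ℝ)
    (hneighbor : ∃ j ∈ Finset.Icc 1 n, X j ≠ X' j ∧
        ∀ m ∈ Finset.Icc 1 n, m ≠ j → X m = X' m)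
    (Z : ℕ → Ω → ℝ) (hZmeas : ∀ k, Measurable (Z k))
    (hZindep : iIndepFun
        (fun k : Fin n => Z ((k : ℕ) + 1)) Prb)
    (hZlaw : ∀ k ∈ Finset.Icc 1 n, Measure.map (Z k) Prb = laplaceMeasure (A / ε))
    (K K' : Ω → ℕ)
    (hK : ∀ ω, K ω ∈ Finset.Icc 1 n ∧ ∀ k ∈ Finset.Icc 1 n,
        (∑ m ∈ Finset.Icc k n, Real.log (P₁ (X m) / P₀ (X m))) + Z k ω
          ≤ (∑ m ∈ Finset.Icc (K ω) n, Real.log (P₁ (X m) / P₀ (X m))) + Z (K ω) ω)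
    (hK' : ∀ ω, K' ω ∈ Finset.Icc 1 n ∧ ∀ k ∈ Finset.Icc 1 n,
        (∑ m ∈ Finset.Icc k n, Real.log (P₁ (X' m) / P₀ (X' m))) + Z k ω
          ≤ (∑ m ∈ Finset.Icc (K' ω) n, Real.log (P₁ (X' m) / P₀ (X' m))) + Z (K' ω) ω)
    (i : ℕ) (hi : i ∈ Finset.Icc 1 n) :
    Prb {ω | K ω = i} ≤ ENNReal.ofReal (Real.exp ε) * Prb {ω | K' ω = i} := by
  set L : ℝ → ℝ := fun x => Real.log (P₁ x / P₀ x)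
  have hb : 0 < A / ε := by
    have := hZindep.isProbabilityMeasure
    refine pos_of_laplaceMeasure_ne_zero ?_
    rw [← hZlaw i hi]
    exact (Measure.isProbabilityMeasure_map (hZmeas i).aemeasurable).ne_zero
  have hApos : 0 < A := (div_pos_iff_of_pos_right hε).mp hb
  obtain ⟨j, -, -, hsame⟩ := hneighbor
  have hsame_Icc (k : Finset.Icc 1 n) :
      ∀ m ∈ Finset.Icc (k : ℕ) n, m ≠ j → L (X m) = L (X' m) := fun m hm hmj => by
    rw [hsame m (Finset.Icc_subset_Icc_left (Finset.mem_Icc.mp k.2).1 hm) hmj]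
  have key := measure_argmax_eq_le_exp_mul (fun k : Finset.Icc 1 n => hZmeas k)
    hZindep.Icc_one_of_fin hb hApos.le (i := ⟨i, hi⟩) (hZlaw i hi)
    (fun k => Finset.sum_sub_sum_le_sum_sub_sum_add (hsame_Icc k) (hsame_Icc ⟨i, hi⟩)
      (hA ▸ abs_sub_le_sSup_sub_sInf hbddAbove hbddBelow (X j) (X' j)))
    (K := fun ω => ⟨K ω, (hK ω).1⟩) (K' := fun ω => ⟨K' ω, (hK' ω).1⟩)
    (fun ω k => (hK ω).2 k k.2) (fun ω k => (hK' ω).2 k k.2)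
  simpa [Subtype.ext_iff, div_div_cancel₀ hApos.ne'] using key

/-- Theorem 5 of the paper: `OfflinePCPD` with `δ = 0` is
`(ε,0)`-differentially private.  Here `X, X'` are arbitrary neighboring databases
(differing in exactly one entry among positions `1,…,n`), the noise variables
`Z_1,…,Z_n` are independent `Lap(A/ε)` random variables where
`A = sup_x log (P₁ x / P₀ x) - inf_x log (P₁ x / P₀ x)` is finite, and
`K` (resp. `K'`) selects an argmax over `k ∈ {1,…,n}` of
`ℓ(k,X) + Z_k` where `ℓ(k,X) = ∑_{j=k}^n log (P₁ (X j) / P₀ (X j))`.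
Then `Pr[K = i] ≤ e^ε · Pr[K' = i]`. -/
theorem offlinePCPD_privacy
    {Ω : Type*} [MeasurableSpace Ω] (Prb : Measure Ω) [IsProbabilityMeasure Prb]
    (P₀ P₁ : ℝ → ℝ) (hP₀ : IsDensity P₀) (hP₁ : IsDensity P₁)
    (hbddAbove : BddAbove (Set.range fun x => Real.log (P₁ x / P₀ x)))
    (hbddBelow : BddBelow (Set.range fun x => Real.log (P₁ x / P₀ x)))
    (A : ℝ)
    (hA : A = sSup (Set.range fun x => Real.log (P₁ x / P₀ x))
            - sInf (Set.range fun x => Real.log (P₁ x / P₀ x)))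
    (ε : ℝ) (hε : 0 < ε)
    (n : ℕ) (hn : 1 ≤ n)
    (X X' : ℕ → ℝ)
    (hneighbor : ∃ j ∈ Finset.Icc 1 n, X j ≠ X' j ∧
        ∀ m ∈ Finset.Icc 1 n, m ≠ j → X m = X' m)
    (Z : ℕ → Ω → ℝ) (hZmeas : ∀ k, Measurable (Z k))
    (hZindep : iIndepFun
        (fun k : Fin n => Z ((k : ℕ) + 1)) Prb)
    (hZlaw : ∀ k ∈ Finset.Icc 1 n, Measure.map (Z k) Prb = laplaceMeasure (A / ε))
    (K K' : Ω → ℕ)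
    (hK : ∀ ω, K ω ∈ Finset.Icc 1 n ∧ ∀ k ∈ Finset.Icc 1 n,
        (∑ m ∈ Finset.Icc k n, Real.log (P₁ (X m) / P₀ (X m))) + Z k ω
          ≤ (∑ m ∈ Finset.Icc (K ω) n, Real.log (P₁ (X m) / P₀ (X m))) + Z (K ω) ω)
    (hK' : ∀ ω, K' ω ∈ Finset.Icc 1 n ∧ ∀ k ∈ Finset.Icc 1 n,
        (∑ m ∈ Finset.Icc k n, Real.log (P₁ (X' m) / P₀ (X' m))) + Z k ω
          ≤ (∑ m ∈ Finset.Icc (K' ω) n, Real.log (P₁ (X' m) / P₀ (X' m))) + Z (K' ω) ω)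
    (i : ℕ) (hi : i ∈ Finset.Icc 1 n) :
    Prb {ω | K ω = i} ≤ ENNReal.ofReal (Real.exp ε) * Prb {ω | K' ω = i} :=
  offlinePCPD_privacy_general Prb P₀ P₁ hbddAbove hbddBelow A hA ε hε n X X' hneighbor Z hZmeas
    hZindep hZlaw K K' hK hK' i hi
end

section
/- Let P_0, P_1 be probability densities with A = sup_x log(P_1(x)/P_0(x)) − inf_{x'} log(P_1(x')/P_0(x')) finite, and let C = min{D_KL(P_1||P_0), D_KL(P_0||P_1)}. Let X = (x_1,…,x_n) be independent with x_i ~ P_0 for i < k* and x_i ~ P_1 for i ≥ k*, where k* ∈ (1,n]. Let k̂ = argmax_{1≤k≤n} ℓ(k,X) be the maximum likelihood estimator of the change point, where ℓ(k,X) = Σ_{i=k}^n log(P_1(x_i)/P_0(x_i)). Then for every β > 0, with α = (2A²/C²)·log(32/(3β)), we have Pr[|k̂ − k*| < α] ≥ 1 − β. -/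
open MeasureTheory ProbabilityTheory

/-- The Kullback–Leibler divergence `D_KL(P‖Q)` of densities on `ℝ`. -/
noncomputable def klDivR (P Q : ℝ → ℝ) : ℝ :=
  ∫ x, P x * Real.log (P x / Q x)

/-!
If `k̂ < k*`, maximality of `k̂` makes the sum of the log-likelihood ratios of the pre-change
samples `x_{k̂}, …, x_{k*-1}` nonnegative, although each of them has mean `-D_KL(P₀‖P₁) ≤ -C` and
takes values in an interval of length `A`; symmetrically, if `k̂ > k*`, the negated ratios of
`x_{k*}, …, x_{k̂-1}` have a nonnegative sum although their mean is `-D_KL(P₁‖P₀) ≤ -C`.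
By Hoeffding's lemma each of these terms `Z` satisfies `E exp(t Z) ≤ ρ = exp(-C²/(2A²))` at
`t = C/A²`, and a Ville-type maximal inequality for `exp(t S_m)` (with `S_m` the partial sums
read away from `k*`) bounds the probability that some `S_m` with `m ≥ α` is nonnegative by
`ρ^⌈α⌉ ≤ 3β/32`, on each side of `k*`.
-/

open Finset Real

section Hoeffding

variable {Ω : Type*} [MeasurableSpace Ω] {μ : Measure Ω}

lemma mgf_le_exp_of_mem_Icc [IsProbabilityMeasure μ] {X : Ω → ℝ} {a b : ℝ}
    (hm : AEMeasurable X μ) (hb : ∀ᵐ ω ∂μ, X ω ∈ Set.Icc a b) (t : ℝ) :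
    mgf X μ t ≤ exp (t * μ[X] + (b - a) ^ 2 * t ^ 2 / 8) := by
  have hc : (((‖b - a‖₊ / 2) ^ 2 : NNReal) : ℝ) = (b - a) ^ 2 / 4 := by
    simp [div_pow]; norm_num
  have hcentered := (hasSubgaussianMGF_of_mem_Icc hm hb).mgf_le t
  rw [hc] at hcentered
  calc mgf X μ t = exp (t * μ[X]) * mgf (fun ω => X ω - μ[X]) μ t := by
        rw [← mgf_const_add]; simp
    _ ≤ exp (t * μ[X]) * exp ((b - a) ^ 2 / 4 * t ^ 2 / 2) :=
        mul_le_mul_of_nonneg_left hcentered (exp_pos _).le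
    _ = exp (t * μ[X] + (b - a) ^ 2 * t ^ 2 / 8) := by rw [← exp_add]; ring_nf

lemma mgf_le_exp_of_mem_Icc_of_integral_le [IsProbabilityMeasure μ] {X : Ω → ℝ} {a b C : ℝ}
    (hm : AEMeasurable X μ) (hb : ∀ᵐ ω ∂μ, X ω ∈ Set.Icc a b) (hab : a < b) (hC : 0 ≤ C)
    (hmean : μ[X] ≤ -C) :
    mgf X μ (C / (b - a) ^ 2) ≤ exp (-(C ^ 2 / (2 * (b - a) ^ 2))) := by
  refine (mgf_le_exp_of_mem_Icc hm hb _).trans (exp_le_exp.2 ?_)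
  have hba : 0 < (b - a) ^ 2 := pow_pos (sub_pos.2 hab) 2
  calc C / (b - a) ^ 2 * μ[X] + (b - a) ^ 2 * (C / (b - a) ^ 2) ^ 2 / 8
      ≤ C / (b - a) ^ 2 * -C + (b - a) ^ 2 * (C / (b - a) ^ 2) ^ 2 / 8 := by gcongr
    _ = -(C ^ 2 / (2 * (b - a) ^ 2)) - 3 / 8 * (C ^ 2 / (b - a) ^ 2) := by field_simp; ring
    _ ≤ -(C ^ 2 / (2 * (b - a) ^ 2)) := by linarith [div_nonneg (sq_nonneg C) hba.le]

end Hoeffding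

def firstHit {α : Type*} (p : ℕ → α → Prop) (m₀ m : ℕ) : Set α :=
  {ω | p m ω ∧ ∀ k ∈ Ico m₀ m, ¬p k ω}

lemma firstHit_eq_inter_biInter {α : Type*} (p : ℕ → α → Prop) (m₀ m : ℕ) :
    firstHit p m₀ m = {ω | p m ω} ∩ ⋂ k ∈ Ico m₀ m, {ω | p k ω}ᶜ := by
  ext; simp [firstHit]

lemma pairwiseDisjoint_firstHit {α : Type*} (p : ℕ → α → Prop) (m₀ : ℕ) :
    (Set.Ici m₀).PairwiseDisjoint (firstHit p m₀) := by
  intro m hm m' hm' hne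
  refine Set.disjoint_left.2 fun ω hω hω' => ?_
  rcases lt_or_gt_of_ne hne with h | h
  · exact hω'.2 m (mem_Ico.2 ⟨hm, h⟩) hω.1
  · exact hω.2 m' (mem_Ico.2 ⟨hm', h⟩) hω'.1

lemma setOf_exists_subset_biUnion_firstHit {α : Type*} (p : ℕ → α → Prop) (m₀ N : ℕ) :
    {ω | ∃ m ∈ Icc m₀ N, p m ω} ⊆ ⋃ m ∈ Icc m₀ N, firstHit p m₀ m := by
  classical
  rintro ω ⟨m, hm, hpm⟩
  obtain ⟨hm₀m, hmN⟩ := mem_Icc.1 hm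
  have hex : ∃ m, m₀ ≤ m ∧ p m ω := ⟨m, hm₀m, hpm⟩
  obtain ⟨hfind₀, hfind⟩ := Nat.find_spec hex
  refine Set.mem_biUnion (mem_Icc.2 ⟨hfind₀, (Nat.find_min' hex ⟨hm₀m, hpm⟩).trans hmN⟩)
    ⟨hfind, fun k hk hpk => Nat.find_min hex (mem_Ico.1 hk).2 ⟨(mem_Ico.1 hk).1, hpk⟩⟩

section MaximalInequality

variable {Ω : Type*} {N : ℕ} {Z : ℕ → Ω → ℝ}

abbrev generatedBy (Z : ℕ → Ω → ℝ) (S : Set (Fin N)) : MeasurableSpace Ω :=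
  ⨆ i ∈ S, MeasurableSpace.comap (Z i) inferInstance

lemma measurable_generatedBy_sum {S : Set (Fin N)} {s : Finset ℕ}
    (hs : ∀ j ∈ s, ∃ i ∈ S, (i : ℕ) = j) :
    Measurable[generatedBy Z S] fun ω => ∑ j ∈ s, Z j ω := by
  refine Finset.measurable_sum (m := generatedBy Z S) s fun j hj => ?_
  obtain ⟨i, hi, rfl⟩ := hs j hj
  exact (comap_measurable (Z i)).mono
    (le_iSup₂ (f := fun i (_ : i ∈ S) => MeasurableSpace.comap (Z i) inferInstance) i hi) le_rfl

variable [MeasurableSpace Ω] {μ : Measure Ω}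

lemma generatedBy_le (hZ : ∀ i, Measurable (Z i)) (S : Set (Fin N)) :
    generatedBy Z S ≤ ‹MeasurableSpace Ω› :=
  iSup₂_le fun i _ => (hZ i).comap_le

lemma indepFun_of_measurable_generatedBy (hZ : ∀ i, Measurable (Z i))
    (hindep : iIndepFun (fun i : Fin N => Z i) μ) {S T : Set (Fin N)} (hST : Disjoint S T)
    {U V : Ω → ℝ} (hU : Measurable[generatedBy Z S] U) (hV : Measurable[generatedBy Z T] V) :
    IndepFun U V μ :=
  (IndepFun_iff_Indep _ _ _).2 <| indep_of_indep_of_le_right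
    (indep_of_indep_of_le_left
      (indep_iSup_of_disjoint (fun i : Fin N => (hZ i).comap_le) hindep hST) hU.comap_le)
    hV.comap_le

lemma setIntegral_exp_mul_sum_range_eq (hZ : ∀ i, Measurable (Z i))
    (hindep : iIndepFun (fun i : Fin N => Z i) μ) (t : ℝ) {m m' : ℕ} (hmm' : m ≤ m')
    (hm' : m' ≤ N) {E : Set Ω} (hE : MeasurableSet[generatedBy Z {i : Fin N | i < m}] E) :
    ∫ ω in E, exp (t * ∑ i ∈ range m', Z i ω) ∂μ
      = (∫ ω in E, exp (t * ∑ i ∈ range m, Z i ω) ∂μ)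
        * ∫ ω, exp (t * ∑ i ∈ Ico m m', Z i ω) ∂μ := by
  have hE' : MeasurableSet E := generatedBy_le hZ _ _ hE
  have hpast : Measurable[generatedBy Z {i : Fin N | i < m}]
      (E.indicator fun ω => exp (t * ∑ i ∈ range m, Z i ω)) :=
    ((measurable_generatedBy_sum fun j hj =>
      ⟨⟨j, by simp at hj; omega⟩, by simpa using hj, rfl⟩).const_mul t).exp.indicator hE
  have hfuture : Measurable[generatedBy Z {i : Fin N | m ≤ i}]
      fun ω => exp (t * ∑ i ∈ Ico m m', Z i ω) :=
    ((measurable_generatedBy_sum fun j hj =>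
      ⟨⟨j, by simp at hj; omega⟩, by simp at hj ⊢; omega, rfl⟩).const_mul t).exp
  have hindepUV := indepFun_of_measurable_generatedBy hZ hindep
    (Set.disjoint_left.2 fun i (hi : (i : ℕ) < m) (hi' : m ≤ (i : ℕ)) => by omega) hpast hfuture
  calc ∫ ω in E, exp (t * ∑ i ∈ range m', Z i ω) ∂μ
      = ∫ ω, E.indicator (fun ω => exp (t * ∑ i ∈ range m, Z i ω)) ω
          * exp (t * ∑ i ∈ Ico m m', Z i ω) ∂μ := by
        rw [← integral_indicator hE']
        congr 1 with ω
        by_cases hω : ω ∈ E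
        · simp [hω, ← sum_range_add_sum_Ico _ hmm', mul_add, exp_add]
        · simp [hω]
    _ = _ := by
        rw [hindepUV.integral_fun_mul_eq_mul_integral
          (hpast.mono (generatedBy_le hZ _) le_rfl).aestronglyMeasurable
          (hfuture.mono (generatedBy_le hZ _) le_rfl).aestronglyMeasurable,
          integral_indicator hE']

lemma integrable_exp_mul_sum [IsFiniteMeasure μ] (hZ : ∀ i, Measurable (Z i)) {b t : ℝ}
    (hb : ∀ i ω, Z i ω ≤ b) (ht : 0 ≤ t) (s : Finset ℕ) :
    Integrable (fun ω => exp (t * ∑ i ∈ s, Z i ω)) μ := by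
  refine .of_bound (((Finset.measurable_sum s fun i _ => hZ i).const_mul t).exp
    |>.aestronglyMeasurable) (exp (t * (s.card • b))) (ae_of_all _ fun ω => ?_)
  rw [Real.norm_of_nonneg (exp_pos _).le]
  gcongr
  exact sum_le_card_nsmul _ _ _ fun i _ => hb i ω

lemma integral_exp_mul_sum_range_le_pow [IsProbabilityMeasure μ] (hZ : ∀ i, Measurable (Z i))
    (hindep : iIndepFun (fun i : Fin N => Z i) μ) {t ρ : ℝ} (hρ : 0 ≤ ρ)
    (hmgf : ∀ i < N, mgf (Z i) μ t ≤ ρ) {m : ℕ} (hm : m ≤ N) :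
    ∫ ω, exp (t * ∑ i ∈ range m, Z i ω) ∂μ ≤ ρ ^ m := by
  induction m with
  | zero => simp
  | succ m ih =>
    have hsplit := setIntegral_exp_mul_sum_range_eq (μ := μ) hZ hindep t m.le_succ hm
      MeasurableSet.univ
    simp only [setIntegral_univ, Nat.Ico_succ_singleton, sum_singleton] at hsplit
    rw [hsplit, pow_succ]
    exact mul_le_mul (ih (by omega)) (hmgf m (by omega)) (integral_nonneg fun _ => (exp_pos _).le)
      (pow_nonneg hρ m)

/- `exp (t S_N) = exp (t S_m) * exp (t (S_N - S_m))`, where the second factor is independent of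
`E` and the first one is `≥ 1` on `E` and has mean `≤ ρ ^ m`. -/
lemma measureReal_mul_integral_exp_le [IsProbabilityMeasure μ] (hZ : ∀ i, Measurable (Z i))
    (hindep : iIndepFun (fun i : Fin N => Z i) μ) {b t ρ : ℝ} (hb : ∀ i ω, Z i ω ≤ b)
    (ht : 0 ≤ t) (hρ : 0 ≤ ρ) (hmgf : ∀ i < N, mgf (Z i) μ t ≤ ρ) {m : ℕ} (hm : m ≤ N)
    {E : Set Ω} (hE : MeasurableSet[generatedBy Z {i : Fin N | i < m}] E)
    (hES : ∀ ω ∈ E, 0 ≤ ∑ i ∈ range m, Z i ω) :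
    μ.real E * ∫ ω, exp (t * ∑ i ∈ range N, Z i ω) ∂μ
      ≤ ρ ^ m * ∫ ω in E, exp (t * ∑ i ∈ range N, Z i ω) ∂μ := by
  have hsplit {F : Set Ω} (hF : MeasurableSet[generatedBy Z {i : Fin N | i < m}] F) :=
    setIntegral_exp_mul_sum_range_eq (μ := μ) hZ hindep t hm le_rfl hF
  have hsplit_univ := hsplit MeasurableSet.univ
  simp only [setIntegral_univ] at hsplit_univ
  have hmeasE : μ.real E ≤ ∫ ω in E, exp (t * ∑ i ∈ range m, Z i ω) ∂μ := by
    rw [← mul_one (μ.real E), ← smul_eq_mul, ← setIntegral_const]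
    exact setIntegral_mono_on (integrable_const 1).integrableOn
      (integrable_exp_mul_sum hZ hb ht _).integrableOn (generatedBy_le hZ _ _ hE)
      fun ω hω => one_le_exp (mul_nonneg ht (hES ω hω))
  rw [hsplit_univ, hsplit hE, ← mul_assoc, ← mul_assoc, mul_comm (μ.real E)]
  exact mul_le_mul_of_nonneg_right
    (mul_le_mul (integral_exp_mul_sum_range_le_pow hZ hindep hρ hmgf hm) hmeasE
      measureReal_nonneg (pow_nonneg hρ _))
    (integral_nonneg fun _ => (exp_pos _).le)

/- Ville's inequality for the process `exp (t S_m)`, proved by splitting the event according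
to the first `m ≥ m₀` with `S_m ≥ 0`. -/
theorem measure_exists_sum_range_nonneg_le [IsProbabilityMeasure μ] (hZ : ∀ i, Measurable (Z i))
    (hindep : iIndepFun (fun i : Fin N => Z i) μ) {b t ρ : ℝ} (hb : ∀ i ω, Z i ω ≤ b)
    (ht : 0 ≤ t) (hρ₀ : 0 ≤ ρ) (hρ₁ : ρ ≤ 1) (hmgf : ∀ i < N, mgf (Z i) μ t ≤ ρ) (m₀ : ℕ) :
    μ {ω | ∃ m ∈ Icc m₀ N, 0 ≤ ∑ i ∈ range m, Z i ω} ≤ ENNReal.ofReal (ρ ^ m₀) := by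
  set p : ℕ → Ω → Prop := fun m ω => 0 ≤ ∑ i ∈ range m, Z i ω
  set Y : Ω → ℝ := fun ω => exp (t * ∑ i ∈ range N, Z i ω)
  have hYint : Integrable Y μ := integrable_exp_mul_sum hZ hb ht _
  have hmeas : ∀ m ≤ N, MeasurableSet[generatedBy Z {i : Fin N | i < m}] (firstHit p m₀ m) := by
    intro m hm
    have hS : ∀ k ≤ m, Measurable[generatedBy Z {i : Fin N | i < m}]
        fun ω => ∑ i ∈ range k, Z i ω := fun k hk =>
      measurable_generatedBy_sum fun j hj => ⟨⟨j, by simp at hj; omega⟩, by simp at hj ⊢; omega, rfl⟩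
    rw [firstHit_eq_inter_biInter]
    exact (measurableSet_le measurable_const (hS m le_rfl)).inter <| .biInter (Set.to_countable _)
      fun k hk => (measurableSet_le measurable_const (hS k (by simp at hk; omega))).compl
  have hmeas' : ∀ m ∈ Icc m₀ N, MeasurableSet (firstHit p m₀ m) := fun m hm =>
    generatedBy_le hZ _ _ (hmeas m (mem_Icc.1 hm).2)
  have hdisj : (↑(Icc m₀ N) : Set ℕ).PairwiseDisjoint (firstHit p m₀) :=
    (pairwiseDisjoint_firstHit p m₀).subset fun m hm => (mem_Icc.1 hm).1
  have hsum : μ.real (⋃ m ∈ Icc m₀ N, firstHit p m₀ m) * ∫ ω, Y ω ∂μ ≤ ρ ^ m₀ * ∫ ω, Y ω ∂μ :=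
    calc μ.real (⋃ m ∈ Icc m₀ N, firstHit p m₀ m) * ∫ ω, Y ω ∂μ
        = ∑ m ∈ Icc m₀ N, μ.real (firstHit p m₀ m) * ∫ ω, Y ω ∂μ := by
          rw [measureReal_biUnion_finset hdisj hmeas', sum_mul]
      _ ≤ ∑ m ∈ Icc m₀ N, ρ ^ m₀ * ∫ ω in firstHit p m₀ m, Y ω ∂μ := by
          refine sum_le_sum fun m hm => (measureReal_mul_integral_exp_le hZ hindep hb ht hρ₀ hmgf
            (mem_Icc.1 hm).2 (hmeas m (mem_Icc.1 hm).2) fun ω hω => hω.1).trans ?_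
          exact mul_le_mul_of_nonneg_right (pow_le_pow_of_le_one hρ₀ hρ₁ (mem_Icc.1 hm).1)
            (setIntegral_nonneg (hmeas' m hm) fun _ _ => (exp_pos _).le)
      _ ≤ ρ ^ m₀ * ∫ ω, Y ω ∂μ := by
          rw [← mul_sum, ← integral_biUnion_finset _ hmeas' hdisj fun _ _ => hYint.integrableOn]
          exact mul_le_mul_of_nonneg_left
            (setIntegral_le_integral hYint (ae_of_all _ fun _ => (exp_pos _).le)) (pow_nonneg hρ₀ _)
  calc μ {ω | ∃ m ∈ Icc m₀ N, p m ω} ≤ μ (⋃ m ∈ Icc m₀ N, firstHit p m₀ m) :=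
        measure_mono (setOf_exists_subset_biUnion_firstHit p m₀ N)
    _ = ENNReal.ofReal (μ.real (⋃ m ∈ Icc m₀ N, firstHit p m₀ m)) :=
        (ofReal_measureReal (measure_ne_top _ _)).symm
    _ ≤ ENNReal.ofReal (ρ ^ m₀) :=
        ENNReal.ofReal_le_ofReal (le_of_mul_le_mul_right hsum (integral_exp_pos hYint))

end MaximalInequality

lemma sum_Icc_eq_sum_Ico_add_sum_Icc {M : Type*} [AddCommMonoid M] (f : ℕ → M) {a b n : ℕ}
    (hab : a ≤ b) (hbn : b ≤ n + 1) :
    ∑ i ∈ Icc a n, f i = ∑ i ∈ Ico a b, f i + ∑ i ∈ Icc b n, f i := by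
  rw [← Ico_add_one_right_eq_Icc, ← Ico_add_one_right_eq_Icc, sum_Ico_consecutive f hab hbn]

lemma sum_Ico_eq_sum_range_sub {M : Type*} [AddCommMonoid M] (f : ℕ → M) (a b : ℕ) :
    ∑ i ∈ Ico a b, f i = ∑ j ∈ range (b - a), f (b - 1 - j) := by
  rw [sum_Ico_eq_sum_range, ← sum_range_reflect]
  exact sum_congr rfl fun j hj => congrArg f (by simp at hj; omega)

lemma exists_sum_range_nonneg_of_le_abs_sub {f : ℕ → ℝ} {n kstar khat : ℕ} (hkstar : kstar ≤ n)
    (hkhat : khat ∈ Icc 1 n) (hmax : ∑ i ∈ Icc kstar n, f i ≤ ∑ i ∈ Icc khat n, f i) {α : ℝ}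
    (hα : α ≤ |(khat : ℝ) - kstar|) :
    (∃ m ∈ Icc ⌈α⌉₊ (kstar - 1), 0 ≤ ∑ j ∈ range m, f (kstar - 1 - j)) ∨
      ∃ m ∈ Icc ⌈α⌉₊ (n + 1 - kstar), 0 ≤ ∑ j ∈ range m, -f (kstar + j) := by
  obtain ⟨hkhat₁, hkhatn⟩ := mem_Icc.1 hkhat
  rcases le_or_gt khat kstar with h | h
  · left
    refine ⟨kstar - khat, mem_Icc.2 ⟨Nat.ceil_le.2 ?_, by omega⟩, ?_⟩
    · rw [Nat.cast_sub h]
      rwa [abs_sub_comm, abs_of_nonneg (sub_nonneg.2 (by exact_mod_cast h))] at hα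
    · rw [← sum_Ico_eq_sum_range_sub f]
      linarith [sum_Icc_eq_sum_Ico_add_sum_Icc f h (by omega : kstar ≤ n + 1)]
  · right
    refine ⟨khat - kstar, mem_Icc.2 ⟨Nat.ceil_le.2 ?_, by omega⟩, ?_⟩
    · rw [Nat.cast_sub h.le]
      rwa [abs_of_nonneg (sub_nonneg.2 (by exact_mod_cast h.le))] at hα
    · rw [sum_neg_distrib, ← sum_Ico_eq_sum_range]
      linarith [sum_Icc_eq_sum_Ico_add_sum_Icc f h.le (by omega : khat ≤ n + 1)]

lemma integral_densityMeasure {P : ℝ → ℝ} (hP : IsDensity P) (g : ℝ → ℝ) :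
    ∫ y, g y ∂densityMeasure P = ∫ y, P y * g y := by
  rw [densityMeasure, integral_withDensity_eq_integral_toReal_smul hP.measurable.ennreal_ofReal
    (ae_of_all _ fun _ => ENNReal.ofReal_lt_top)]
  simp [ENNReal.toReal_ofReal (hP.nonneg _)]

lemma integral_log_div_densityMeasure {P : ℝ → ℝ} (hP : IsDensity P) (Q : ℝ → ℝ) :
    ∫ y, log (P y / Q y) ∂densityMeasure P = klDivR P Q :=
  integral_densityMeasure hP _

lemma integral_log_div_rev_densityMeasure {P : ℝ → ℝ} (hP : IsDensity P) (Q : ℝ → ℝ) :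
    ∫ y, log (Q y / P y) ∂densityMeasure P = -klDivR P Q := by
  simp_rw [← integral_log_div_densityMeasure hP, ← integral_neg, ← log_inv, inv_div]

section ChangePoint

variable {Ω : Type*} [MeasurableSpace Ω] {μ : Measure Ω} {n : ℕ} {x : ℕ → Ω → ℝ}

lemma iIndepFun_comp_reindex (hindep : iIndepFun (fun i : Fin n => x (i + 1)) μ) {φ : ℝ → ℝ}
    (hφ : Measurable φ) {N : ℕ} {g : ℕ → ℕ} (hg : ∀ j < N, g j ∈ Icc 1 n)
    (hinj : Set.InjOn g (Set.Iio N)) :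
    iIndepFun (fun j : Fin N => fun ω => φ (x (g j) ω)) μ := by
  have hg' : ∀ j : Fin N, g j - 1 < n := fun j => by have := mem_Icc.1 (hg j j.2); omega
  have he : Function.Injective fun j : Fin N => (⟨g j - 1, hg' j⟩ : Fin n) := by
    intro j j' hjj'
    have h := mem_Icc.1 (hg j j.2)
    have h' := mem_Icc.1 (hg j' j'.2)
    exact Fin.ext (hinj j.2 j'.2 (by simp [Fin.ext_iff] at hjj'; omega))
  convert (hindep.precomp he).comp (fun _ => φ) fun _ => hφ using 3 with j ω
  simp [Nat.sub_add_cancel (mem_Icc.1 (hg j j.2)).1]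

theorem measure_exists_sum_range_comp_nonneg_le [IsProbabilityMeasure μ]
    (hindep : iIndepFun (fun i : Fin n => x (i + 1)) μ) (hx : ∀ i, Measurable (x i))
    {φ : ℝ → ℝ} (hφ : Measurable φ) {a b : ℝ} (hφab : ∀ y, φ y ∈ Set.Icc a b) (hab : a < b)
    {ν : Measure ℝ} {C : ℝ} (hC : 0 ≤ C) (hmean : ∫ y, φ y ∂ν ≤ -C) {N : ℕ} {g : ℕ → ℕ}
    (hg : ∀ j < N, g j ∈ Icc 1 n) (hinj : Set.InjOn g (Set.Iio N))
    (hlaw : ∀ j < N, μ.map (x (g j)) = ν) (m₀ : ℕ) :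
    μ {ω | ∃ m ∈ Icc m₀ N, 0 ≤ ∑ j ∈ range m, φ (x (g j) ω)}
      ≤ ENNReal.ofReal (exp (-(C ^ 2 / (2 * (b - a) ^ 2))) ^ m₀) := by
  refine measure_exists_sum_range_nonneg_le (Z := fun j ω => φ (x (g j) ω)) (t := C / (b - a) ^ 2)
    (fun j => hφ.comp (hx _)) (iIndepFun_comp_reindex hindep hφ hg hinj)
    (fun j ω => (hφab _).2) (by positivity) (exp_pos _).le
    (exp_le_one_iff.2 (neg_nonpos.2 (by positivity))) (fun j hj => ?_) m₀
  refine mgf_le_exp_of_mem_Icc_of_integral_le (hφ.comp (hx _)).aemeasurable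
    (ae_of_all _ fun ω => hφab _) hab hC ?_
  rwa [← integral_map (hx _).aemeasurable hφ.aestronglyMeasurable, hlaw j hj]

variable {P₀ P₁ : ℝ → ℝ} {kstar : ℕ} {a b C : ℝ}

theorem measure_exists_sum_llr_before_change_nonneg_le [IsProbabilityMeasure μ]
    (hindep : iIndepFun (fun i : Fin n => x (i + 1)) μ) (hx : ∀ i, Measurable (x i))
    (hP₀ : IsDensity P₀) (hP₁ : IsDensity P₁) (hbd : ∀ y, log (P₁ y / P₀ y) ∈ Set.Icc a b)
    (hab : a < b) (hC : 0 ≤ C) (hKL : C ≤ klDivR P₀ P₁) (hkstar : kstar ≤ n + 1)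
    (hlaw₀ : ∀ i ∈ Icc 1 n, i < kstar → μ.map (x i) = densityMeasure P₀) (m₀ : ℕ) :
    μ {ω | ∃ m ∈ Icc m₀ (kstar - 1),
        0 ≤ ∑ j ∈ range m, log (P₁ (x (kstar - 1 - j) ω) / P₀ (x (kstar - 1 - j) ω))}
      ≤ ENNReal.ofReal (exp (-(C ^ 2 / (2 * (b - a) ^ 2))) ^ m₀) := by
  refine measure_exists_sum_range_comp_nonneg_le hindep hx (φ := fun y => log (P₁ y / P₀ y))
    (hP₁.measurable.div hP₀.measurable).log hbd hab hC ?_ (g := fun j => kstar - 1 - j)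
    (fun j hj => mem_Icc.2 ⟨by omega, by omega⟩) (fun j hj j' hj' h => by simp at hj hj' h; omega)
    (fun j hj => hlaw₀ _ (mem_Icc.2 ⟨by omega, by omega⟩) (by omega)) m₀
  rwa [integral_log_div_rev_densityMeasure hP₀, neg_le_neg_iff]

theorem measure_exists_sum_llr_after_change_nonpos_le [IsProbabilityMeasure μ]
    (hindep : iIndepFun (fun i : Fin n => x (i + 1)) μ) (hx : ∀ i, Measurable (x i))
    (hP₀ : IsDensity P₀) (hP₁ : IsDensity P₁) (hbd : ∀ y, log (P₁ y / P₀ y) ∈ Set.Icc a b)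
    (hab : a < b) (hC : 0 ≤ C) (hKL : C ≤ klDivR P₁ P₀) (hkstar : 1 ≤ kstar)
    (hlaw₁ : ∀ i ∈ Icc 1 n, kstar ≤ i → μ.map (x i) = densityMeasure P₁) (m₀ : ℕ) :
    μ {ω | ∃ m ∈ Icc m₀ (n + 1 - kstar),
        0 ≤ ∑ j ∈ range m, -log (P₁ (x (kstar + j) ω) / P₀ (x (kstar + j) ω))}
      ≤ ENNReal.ofReal (exp (-(C ^ 2 / (2 * (b - a) ^ 2))) ^ m₀) := by
  have hwidth : -a - -b = b - a := by ring
  rw [← hwidth]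
  refine measure_exists_sum_range_comp_nonneg_le hindep hx (φ := fun y => -log (P₁ y / P₀ y))
    (hP₁.measurable.div hP₀.measurable).log.neg
    (fun y => ⟨neg_le_neg (hbd y).2, neg_le_neg (hbd y).1⟩) (by linarith) hC ?_
    (g := fun j => kstar + j) (fun j hj => mem_Icc.2 ⟨by omega, by omega⟩)
    (fun j hj j' hj' h => by simpa using h)
    (fun j hj => hlaw₁ _ (mem_Icc.2 ⟨by omega, by omega⟩) (by omega)) m₀
  rwa [integral_neg, integral_log_div_densityMeasure hP₁, neg_le_neg_iff]

end ChangePoint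

lemma ofReal_one_sub_le_of_measure_compl_le {Ω : Type*} [MeasurableSpace Ω] {μ : Measure Ω}
    [IsProbabilityMeasure μ] {s : Set Ω} {δ : ℝ} (hδ : 0 ≤ δ) (h : μ sᶜ ≤ ENNReal.ofReal δ) :
    ENNReal.ofReal (1 - δ) ≤ μ s := by
  rw [ENNReal.ofReal_sub 1 hδ, ENNReal.ofReal_one, tsub_le_iff_right]
  calc 1 = μ Set.univ := measure_univ.symm
    _ ≤ μ s + μ sᶜ := measure_univ_le_add_compl s
    _ ≤ μ s + ENNReal.ofReal δ := by gcongr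

lemma exp_neg_pow_nat_ceil_le {c : ℝ} (hc : 0 ≤ c) (α : ℝ) :
    exp (-c) ^ ⌈α⌉₊ ≤ exp (-(c * α)) := by
  rw [← exp_nat_mul, exp_le_exp]
  nlinarith [Nat.le_ceil α]

/-- non-private part of Theorem 4: in the offline change-point model
with data `x_1,…,x_n` independent, `x_i ~ P₀` for `i < k*` and `x_i ~ P₁` for `i ≥ k*`,
`k* ∈ (1,n]`, if `A = sup_x log (P₁ x / P₀ x) - inf_x log (P₁ x / P₀ x)` is finite and
`C = min{D_KL(P₁‖P₀), D_KL(P₀‖P₁)}`, then the MLE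
`k̂ = argmax_{1 ≤ k ≤ n} ℓ(k,X)` satisfies `Pr[|k̂ - k*| < α] ≥ 1 - β` for
`α = (2A²/C²)·log (32/(3β))`. -/
theorem mle_accuracy_bounded
    {Ω : Type*} [MeasurableSpace Ω] (Prb : Measure Ω) [IsProbabilityMeasure Prb]
    (P₀ P₁ : ℝ → ℝ) (hP₀ : IsDensity P₀) (hP₁ : IsDensity P₁)
    (hbddAbove : BddAbove (Set.range fun x => Real.log (P₁ x / P₀ x)))
    (hbddBelow : BddBelow (Set.range fun x => Real.log (P₁ x / P₀ x)))
    (A : ℝ)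
    (hA : A = sSup (Set.range fun x => Real.log (P₁ x / P₀ x))
            - sInf (Set.range fun x => Real.log (P₁ x / P₀ x)))
    (C : ℝ) (hC : C = min (klDivR P₁ P₀) (klDivR P₀ P₁))
    (hApos : 0 < A) (hCpos : 0 < C)
    (n kstar : ℕ) (hkstar₁ : 1 < kstar) (hkstar₂ : kstar ≤ n)
    (x : ℕ → Ω → ℝ) (hxmeas : ∀ i, Measurable (x i))
    (hindep : iIndepFun
        (fun i : Fin n => x ((i : ℕ) + 1)) Prb)
    (hlaw₀ : ∀ i ∈ Finset.Icc 1 n, i < kstar →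
        Measure.map (x i) Prb = densityMeasure P₀)
    (hlaw₁ : ∀ i ∈ Finset.Icc 1 n, kstar ≤ i →
        Measure.map (x i) Prb = densityMeasure P₁)
    (khat : Ω → ℕ)
    (hkhat : ∀ ω, khat ω ∈ Finset.Icc 1 n ∧ ∀ k ∈ Finset.Icc 1 n,
        (∑ m ∈ Finset.Icc k n, Real.log (P₁ (x m ω) / P₀ (x m ω)))
          ≤ ∑ m ∈ Finset.Icc (khat ω) n, Real.log (P₁ (x m ω) / P₀ (x m ω)))
    (β α : ℝ) (hβ : 0 < β)
    (hα : α = 2 * A ^ 2 / C ^ 2 * Real.log (32 / (3 * β))) :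
    ENNReal.ofReal (1 - β) ≤ Prb {ω | |(khat ω : ℝ) - (kstar : ℝ)| < α} := by
  have hbd : ∀ y, log (P₁ y / P₀ y) ∈ Set.Icc (sInf (Set.range fun y => log (P₁ y / P₀ y)))
      (sSup (Set.range fun y => log (P₁ y / P₀ y))) := fun y =>
    ⟨csInf_le hbddBelow ⟨y, rfl⟩, le_csSup hbddAbove ⟨y, rfl⟩⟩
  have hab : sInf (Set.range fun y => log (P₁ y / P₀ y))
      < sSup (Set.range fun y => log (P₁ y / P₀ y)) := by linarith
  have hbefore := measure_exists_sum_llr_before_change_nonneg_le hindep hxmeas hP₀ hP₁ hbd hab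
    hCpos.le (hC ▸ min_le_right _ _) (by omega) hlaw₀ ⌈α⌉₊
  have hafter := measure_exists_sum_llr_after_change_nonpos_le hindep hxmeas hP₀ hP₁ hbd hab
    hCpos.le (hC ▸ min_le_left _ _) hkstar₁.le hlaw₁ ⌈α⌉₊
  rw [← hA] at hbefore hafter
  set q := exp (-(C ^ 2 / (2 * A ^ 2))) ^ ⌈α⌉₊
  have hq : q ≤ 3 * β / 32 := by
    refine (exp_neg_pow_nat_ceil_le (by positivity) α).trans_eq ?_
    rw [show C ^ 2 / (2 * A ^ 2) * α = log (32 / (3 * β)) by rw [hα]; field_simp,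
      exp_neg, exp_log (by positivity), inv_div]
  refine ofReal_one_sub_le_of_measure_compl_le hβ.le ?_
  calc Prb {ω | |(khat ω : ℝ) - kstar| < α}ᶜ
      ≤ Prb (_ ∪ _) := measure_mono fun ω hω =>
        exists_sum_range_nonneg_of_le_abs_sub hkstar₂ (hkhat ω).1
          ((hkhat ω).2 kstar (mem_Icc.2 ⟨hkstar₁.le, hkstar₂⟩)) (not_lt.1 hω)
    _ ≤ ENNReal.ofReal q + ENNReal.ofReal q := (measure_union_le _ _).trans (add_le_add hbefore hafter)
    _ ≤ ENNReal.ofReal β := by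
        rw [← ENNReal.ofReal_add (by positivity) (by positivity)]
        exact ENNReal.ofReal_le_ofReal (by linarith)
end

section
/- Let ε, δ > 0 and let P_0, P_1 be probability densities such that A_δ = min{t : max_{i∈{0,1}} Pr_{x~P_i}[2|log(P_1(x)/P_0(x))| > t] < δ/2} is finite. Fix an index j ∈ {1,…,n}, indices i, i' ∈ {0,1}, and arbitrary values x_1,…,x_{j−1}, x_{j+1},…,x_n ∈ ℝ. Let X_i be the random database with j-th entry drawn from P_i and all other entries as fixed, and let X'_{i'} be the random database with j-th entry an independent draw from P_{i'} and all other entries as fixed. Let M(X) = argmax_{1≤k≤n}(ℓ(k,X) + Z_k) with Z_1,…,Z_n i.i.d. Laplace(A_δ/ε). Then for every S ⊆ {1,…,n}: Pr[M(X_i) ∈ S] ≤ e^ε · Pr[M(X'_{i'}) ∈ S] + δ, where the probabilities are over the noise and over the random j-th entries. -/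
/-!
Fix the `j`-th entries `v, v'` of the two databases. Outside the bad event
`A < 2 |log (P₁ v / P₀ v)|`, which has probability at most `δ/2` by the choice of `A`, the
partial log-likelihoods `ℓ(k, ·)` of the two databases differ by
`log (P₁ v / P₀ v) - log (P₁ v' / P₀ v')` if `k ≤ j ≤ n` and by `0` otherwise, so the differences
`ℓ(k, ·) - ℓ(l, ·)` move by at most `A`. Shifting the noise `Z_k` by `t > A` therefore turns
every noise vector for which `k` is an argmax for `v` into one for which `k` is the strict argmax
for `v'`, and costs a factor `exp (t ε / A)` in Laplace density. Strict argmaxes are disjoint, so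
summing over `k ∈ S`, averaging over `v'` and letting `t ↓ A` gives the bound.
-/

open MeasureTheory ProbabilityTheory

/-- The set of thresholds `t` such that
`max_{i∈{0,1}} Pr_{x ~ P_i}[2|log (P₁ x / P₀ x)| > t] < δ/2`;
its minimum is the quantity `A_δ` of the paper. -/
def AdeltaSet (P₀ P₁ : ℝ → ℝ) (δ : ℝ) : Set ℝ :=
  {t : ℝ | densityMeasure P₀ {x | t < 2 * |Real.log (P₁ x / P₀ x)|} < ENNReal.ofReal (δ / 2)
         ∧ densityMeasure P₁ {x | t < 2 * |Real.log (P₁ x / P₀ x)|} < ENNReal.ofReal (δ / 2)}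

open Filter Topology
open scoped ENNReal

section ArgmaxSets

variable {ι : Type*}

def weakArgmaxSet (f : ι → ℝ) (k : ι) : Set (ι → ℝ) := {z | ∀ l, f l + z l ≤ f k + z k}

def strictArgmaxSet (f : ι → ℝ) (k : ι) : Set (ι → ℝ) := {z | ∀ l ≠ k, f l + z l < f k + z k}

lemma pairwiseDisjoint_strictArgmaxSet (f : ι → ℝ) (s : Set ι) :
    s.PairwiseDisjoint (strictArgmaxSet f) :=
  fun k _ l _ hkl => Set.disjoint_left.2 fun _ hk hl => (hk l hkl.symm).not_gt (hl k hkl)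

lemma weakArgmaxSet_subset_preimage_update [DecidableEq ι] {f f' : ι → ℝ} {k : ι} {t : ℝ}
    (h : ∀ l, (f k - f' k) - (f l - f' l) < t) :
    weakArgmaxSet f k ⊆ (fun z => Function.update z k (z k + t)) ⁻¹' strictArgmaxSet f' k := by
  intro z hz l hlk
  simp only [Function.update_of_ne hlk, Function.update_self]
  linarith [hz l, h l]

variable [Countable ι]

lemma measurableSet_strictArgmaxSet (f : ι → ℝ) (k : ι) :
    MeasurableSet (strictArgmaxSet f k) := by
  refine Measurable.setOf (Measurable.forall fun l => Measurable.imp (by fun_prop) ?_)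
  exact measurableSet_setOfPred.1 (measurableSet_lt (by fun_prop) (by fun_prop))

variable {β : Type*} [MeasurableSpace β] {g : ι → β → ℝ}

lemma measurableSet_weakArgmaxSet_prod (hg : ∀ k, Measurable (g k)) (k : ι) :
    MeasurableSet {q : (ι → ℝ) × β | q.1 ∈ weakArgmaxSet (g · q.2) k} := by
  refine Measurable.setOf (Measurable.forall fun l => measurableSet_setOfPred.1 ?_)
  exact measurableSet_le (by fun_prop) (by fun_prop)

lemma measurableSet_strictArgmaxSet_prod (hg : ∀ k, Measurable (g k)) (k : ι) :
    MeasurableSet {q : (ι → ℝ) × β | q.1 ∈ strictArgmaxSet (g · q.2) k} := by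
  refine Measurable.setOf (Measurable.forall fun l => Measurable.imp (by fun_prop) ?_)
  exact measurableSet_setOfPred.1 (measurableSet_lt (by fun_prop) (by fun_prop))

end ArgmaxSets

section FinReindex

variable {n K : ℕ} {F z : ℕ → ℝ}

lemma exists_fin_mem_weakArgmaxSet
    (hK : K ∈ Finset.Icc 1 n ∧ ∀ k ∈ Finset.Icc 1 n, F k + z k ≤ F K + z K) :
    ∃ k : Fin n, (k : ℕ) + 1 = K ∧
      (fun l : Fin n => z (l + 1)) ∈ weakArgmaxSet (fun l : Fin n => F (l + 1)) k := by
  obtain ⟨hKn, hmax⟩ := hK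
  rw [Finset.mem_Icc] at hKn
  refine ⟨⟨K - 1, by omega⟩, by simp; omega, fun l => ?_⟩
  have hK1 : K - 1 + 1 = K := by omega
  simpa [hK1] using hmax (l + 1) (by simp)

lemma eq_of_mem_strictArgmaxSet_fin
    (hK : K ∈ Finset.Icc 1 n ∧ ∀ k ∈ Finset.Icc 1 n, F k + z k ≤ F K + z K) {k : Fin n}
    (hk : (fun l : Fin n => z (l + 1)) ∈ strictArgmaxSet (fun l : Fin n => F (l + 1)) k) :
    K = k + 1 := by
  obtain ⟨l, rfl, hl⟩ := exists_fin_mem_weakArgmaxSet hK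
  by_contra hne
  exact (hk l (by rintro rfl; exact hne rfl)).not_ge (hl k)

end FinReindex

lemma laplaceMeasure_of_nonpos {b : ℝ} (hb : b ≤ 0) : laplaceMeasure b = 0 := by
  have h : ∀ x : ℝ, Real.exp (-|x| / b) / (2 * b) ≤ 0 := fun x =>
    div_nonpos_of_nonneg_of_nonpos (Real.exp_pos _).le (by linarith)
  simp [laplaceMeasure, ENNReal.ofReal_of_nonpos (h _)]

lemma pos_of_isProbabilityMeasure_laplaceMeasure {b : ℝ}
    [IsProbabilityMeasure (laplaceMeasure b)] : 0 < b := by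
  by_contra! hb
  simpa [laplaceMeasure_of_nonpos hb] using measure_univ (μ := laplaceMeasure b)

lemma laplaceMeasure_preimage_add_le {b : ℝ} (hb : 0 < b) (s : ℝ) (T : Set ℝ) :
    laplaceMeasure b ((· + s) ⁻¹' T)
      ≤ ENNReal.ofReal (Real.exp (|s| / b)) * laplaceMeasure b T := by
  have hshift := (measurePreserving_add_right volume s).setLIntegral_comp_preimage_emb
    (measurableEmbedding_addRight s)
    (fun y => ENNReal.ofReal (Real.exp (-|y - s| / b) / (2 * b))) T
  simp only [add_sub_cancel_right] at hshift
  rw [laplaceMeasure, withDensity_apply', withDensity_apply', hshift,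
    ← lintegral_const_mul' _ _ ENNReal.ofReal_ne_top]
  refine lintegral_mono fun y => ?_
  rw [← ENNReal.ofReal_mul (Real.exp_pos _).le, ← mul_div_assoc, ← Real.exp_add, ← add_div]
  gcongr
  linarith [abs_sub_abs_le_abs_sub y s, abs_sub_comm y s]

lemma MeasureTheory.Measure.pi_preimage_update_apply_le {ι α : Type*} [Fintype ι]
    [DecidableEq ι] [MeasurableSpace α] [Nonempty α] {μ : Measure α} [SigmaFinite μ]
    {g : α → α} (hg : Measurable g) {c : ℝ≥0∞} (hc : c ≠ ∞)
    (hμg : ∀ T, MeasurableSet T → μ (g ⁻¹' T) ≤ c * μ T) (k : ι)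
    {W : Set (ι → α)} (hW : MeasurableSet W) :
    Measure.pi (fun _ => μ) ((fun z => Function.update z k (g (z k))) ⁻¹' W)
      ≤ c * Measure.pi (fun _ => μ) W := by
  -- integrate out the `k`-th coordinate first, where the hypothesis applies to each slice
  have hτ : Measurable fun z : ι → α => Function.update z k (g (z k)) := by fun_prop
  obtain ⟨x₀⟩ : Nonempty (ι → α) := inferInstance
  rw [← lintegral_indicator_one (hτ hW), ← lintegral_indicator_one hW,
    lintegral_eq_lmarginal_univ x₀, lintegral_eq_lmarginal_univ x₀,
    lmarginal_erase' _ (measurable_one.indicator (hτ hW)) (Finset.mem_univ k),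
    lmarginal_erase' _ (measurable_one.indicator hW) (Finset.mem_univ k)]
  calc _ ≤ (∫⋯∫⁻_Finset.univ.erase k,
        (fun x => c * ∫⁻ y, W.indicator 1 (Function.update x k y) ∂μ) ∂fun _ => μ) x₀ := by
        refine lmarginal_mono (fun x => ?_) x₀
        have hx : MeasurableSet {y | Function.update x k y ∈ W} := measurable_update x hW
        have hslice : ∀ y, W.indicator 1 (Function.update x k y)
            = {y | Function.update x k y ∈ W}.indicator (1 : α → ℝ≥0∞) y := fun _ => rfl
        have hslice_τ : ∀ y, ((fun z => Function.update z k (g (z k))) ⁻¹' W).indicator 1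
            (Function.update x k y)
              = (g ⁻¹' {y | Function.update x k y ∈ W}).indicator (1 : α → ℝ≥0∞) y := by
          intro y
          by_cases h : Function.update x k (g y) ∈ W
          · rw [Set.indicator_of_mem, Set.indicator_of_mem] <;> simp [h]
          · rw [Set.indicator_of_notMem, Set.indicator_of_notMem] <;> simp [h]
        simp only [hslice, hslice_τ, lintegral_indicator_one hx, lintegral_indicator_one (hg hx)]
        exact hμg _ hx
    _ = _ := lintegral_const_mul' _ _ hc

lemma le_measure_add_mul_lintegral {β : Type*} [MeasurableSpace β] {μ : Measure β}
    [IsProbabilityMeasure μ] {B : Set β} (hB : MeasurableSet B) {x c : ℝ≥0∞} (hc : c ≠ ∞)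
    {y : β → ℝ≥0∞} (hx : x ≤ 1) (hxy : ∀ v ∉ B, x ≤ c * y v) :
    x ≤ μ B + c * ∫⁻ v, y v ∂μ :=
  calc x = x * μ B + x * μ Bᶜ := by
        rw [← mul_add, measure_add_measure_compl hB, measure_univ, mul_one]
    _ ≤ μ B + c * ∫⁻ v, y v ∂μ := by
        refine add_le_add (mul_le_of_le_one_left' hx) ?_
        calc x * μ Bᶜ = ∫⁻ _ in Bᶜ, x ∂μ := (setLIntegral_const _ _).symm
          _ ≤ ∫⁻ v in Bᶜ, c * y v ∂μ := setLIntegral_mono' hB.compl hxy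
          _ ≤ ∫⁻ v, c * y v ∂μ := setLIntegral_le_lintegral _ _
          _ = c * ∫⁻ v, y v ∂μ := lintegral_const_mul' _ _ hc

lemma MeasureTheory.Measure.prod_apply_le_of_slice_le {α β : Type*} [MeasurableSpace α]
    [MeasurableSpace β] {ν : Measure α} [IsProbabilityMeasure ν] {μ μ' : Measure β}
    [IsProbabilityMeasure μ] [IsProbabilityMeasure μ'] {C C' : Set (α × β)}
    (hC : MeasurableSet C) (hC' : MeasurableSet C') {B : Set β} (hB : MeasurableSet B)
    {c : ℝ≥0∞} (hc : c ≠ ∞)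
    (hslice : ∀ v ∉ B, ∀ v' ∉ B, ν ((·, v) ⁻¹' C) ≤ c * ν ((·, v') ⁻¹' C')) :
    (ν.prod μ) C ≤ c * (ν.prod μ') C' + (μ B + μ' B) := by
  rw [Measure.prod_apply_symm hC, Measure.prod_apply_symm hC', add_comm, add_assoc]
  set I' := ∫⁻ v', ν ((·, v') ⁻¹' C') ∂μ'
  calc ∫⁻ v, ν ((·, v) ⁻¹' C) ∂μ ≤ ∫⁻ v, (B.indicator 1 v + (μ' B + c * I')) ∂μ := by
        refine lintegral_mono fun v => ?_
        by_cases hv : v ∈ B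
        · rw [Set.indicator_of_mem hv]
          exact prob_le_one.trans le_self_add
        · rw [Set.indicator_of_notMem hv, zero_add]
          exact le_measure_add_mul_lintegral hB hc prob_le_one (hslice v hv)
    _ = μ B + (μ' B + c * I') := by
        rw [lintegral_add_right _ measurable_const, lintegral_indicator_one hB,
          lintegral_const, measure_univ, mul_one]

lemma le_ofReal_exp_mul_add_of_forall_pos {x y z : ℝ≥0∞} {ε : ℝ}
    (h : ∀ η > 0, x ≤ ENNReal.ofReal (Real.exp (ε + η)) * y + z) :
    x ≤ ENNReal.ofReal (Real.exp ε) * y + z := by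
  have hexp : Tendsto (fun η => ENNReal.ofReal (Real.exp (ε + η))) (𝓝[>] 0)
      (𝓝 (ENNReal.ofReal (Real.exp ε))) := by
    have : Continuous fun η : ℝ => ENNReal.ofReal (Real.exp (ε + η)) :=
      ENNReal.continuous_ofReal.comp (by fun_prop)
    simpa using (this.tendsto 0).mono_left nhdsWithin_le_nhds
  exact ge_of_tendsto
    ((ENNReal.Tendsto.mul_const hexp (Or.inl (ENNReal.ofReal_pos.2 (Real.exp_pos ε)).ne')).add
      tendsto_const_nhds) (eventually_nhdsWithin_of_forall h)

lemma ProbabilityTheory.iIndepFun.map_pi_prod_eq {Ω ι β : Type*} [MeasurableSpace Ω]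
    [MeasurableSpace β] {P : Measure Ω} [Fintype ι] {Y : ι → Ω → β} {ξ : Ω → β}
    {μ : Measure β} (hY : ∀ i, Measurable (Y i)) (hY_law : ∀ i, P.map (Y i) = μ)
    (hξ : Measurable ξ) (h : iIndepFun (Sum.elim Y fun _ : Unit => ξ) P) :
    P.map (fun ω => (fun i => Y i ω, ξ ω)) = (Measure.pi fun _ : ι => μ).prod (P.map ξ) := by
  classical
  have := h.isProbabilityMeasure
  have hmeas : ∀ i, Measurable (Sum.elim Y (fun _ : Unit => ξ) i) := by
    rintro (i | _)
    exacts [hY i, hξ]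
  set S : Finset (ι ⊕ Unit) := Finset.univ.map Function.Embedding.inl
  set T : Finset (ι ⊕ Unit) := {Sum.inr ()}
  have hpair : IndepFun (fun ω i => Y i ω) ξ P :=
    (h.indepFun_finset S T (by simp [S, T, Finset.disjoint_left]) hmeas).comp
      (φ := fun (y : S → β) i => y ⟨Sum.inl i, by simp [S]⟩)
      (ψ := fun (y : T → β) => y ⟨Sum.inr (), by simp [T]⟩)
      (by fun_prop) (measurable_pi_apply _)
  rw [hpair.map_prod_eq_prod_map_map (by fun_prop) hξ.aemeasurable,
    (h.precomp Sum.inl_injective).map_fun_eq_pi_map fun i => (hY i).aemeasurable]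
  simp only [hY_law]

lemma measure_csInf_lt_le {α : Type*} [MeasurableSpace α] {μ : Measure α} {f : α → ℝ}
    {T : Set ℝ} (hne : T.Nonempty) (hbdd : BddBelow T) {c : ℝ≥0∞}
    (h : ∀ t ∈ T, μ {x | t < f x} ≤ c) : μ {x | sInf T < f x} ≤ c := by
  obtain ⟨u, hu_anti, hu_lim, hu_mem⟩ := exists_seq_tendsto_sInf hne hbdd
  have hunion : {x | sInf T < f x} = ⋃ n, {x | u n < f x} := by
    ext x
    simp only [Set.mem_ofPred_eq, Set.mem_iUnion]
    refine ⟨fun hx => (hu_lim.eventually (gt_mem_nhds hx)).exists, ?_⟩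
    rintro ⟨n, hn⟩
    exact (csInf_le hbdd (hu_mem n)).trans_lt hn
  have hmono : Monotone fun n => {x | u n < f x} := fun m n hmn x hx =>
    (hu_anti hmn).trans_lt hx
  rw [hunion, hmono.measure_iUnion]
  exact iSup_le fun n => h _ (hu_mem n)

lemma Finset.sum_ite_sub_sum_ite {α β M : Type*} [DecidableEq α] [AddCommGroup M]
    (s : Finset α) (f : β → M) (x : α → β) (j : α) (v v' : β) :
    ∑ m ∈ s, f (if m = j then v else x m) - ∑ m ∈ s, f (if m = j then v' else x m)
      = if j ∈ s then f v - f v' else 0 := by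
  rw [← Finset.sum_sub_distrib]
  simp_rw [apply_ite f, ite_sub_ite, sub_self]
  exact Finset.sum_ite_eq' s j _

lemma sum_ite_sub_sub_le {α β : Type*} [DecidableEq α] (s t : Finset α) (f : β → ℝ)
    (x : α → β) (j : α) (v v' : β) :
    (∑ m ∈ s, f (if m = j then v else x m) - ∑ m ∈ s, f (if m = j then v' else x m))
      - (∑ m ∈ t, f (if m = j then v else x m) - ∑ m ∈ t, f (if m = j then v' else x m))
      ≤ |f v - f v'| := by
  rw [Finset.sum_ite_sub_sum_ite, Finset.sum_ite_sub_sum_ite]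
  split_ifs <;> simp [le_abs_self]
  linarith [neg_abs_le (f v - f v')]

section NoisyArgmax

variable {ι : Type*} [Fintype ι] {b : ℝ} [IsProbabilityMeasure (laplaceMeasure b)]

local notation "ν" b:max => Measure.pi fun _ : ι => laplaceMeasure b

lemma pi_laplaceMeasure_weakArgmaxSet_le {f f' : ι → ℝ} {k : ι} {t : ℝ}
    (h : ∀ l, (f k - f' k) - (f l - f' l) < t) :
    (ν b) (weakArgmaxSet f k)
      ≤ ENNReal.ofReal (Real.exp (t / b)) * (ν b) (strictArgmaxSet f' k) := by
  classical
  have ht : 0 ≤ t := by simpa using (h k).le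
  calc (ν b) (weakArgmaxSet f k)
      ≤ (ν b) ((fun z => Function.update z k (z k + t)) ⁻¹' strictArgmaxSet f' k) :=
        measure_mono (weakArgmaxSet_subset_preimage_update h)
    _ ≤ _ := by
        refine Measure.pi_preimage_update_apply_le (measurable_add_const t) ENNReal.ofReal_ne_top
          (fun T _ => ?_) k (measurableSet_strictArgmaxSet f' k)
        simpa [abs_of_nonneg ht] using
          laplaceMeasure_preimage_add_le pos_of_isProbabilityMeasure_laplaceMeasure t T

lemma pi_laplaceMeasure_biUnion_weakArgmaxSet_le {f f' : ι → ℝ} {t : ℝ}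
    (h : ∀ k l, (f k - f' k) - (f l - f' l) < t) (T : Finset ι) :
    (ν b) (⋃ k ∈ T, weakArgmaxSet f k)
      ≤ ENNReal.ofReal (Real.exp (t / b)) * (ν b) (⋃ k ∈ T, strictArgmaxSet f' k) :=
  calc (ν b) (⋃ k ∈ T, weakArgmaxSet f k)
      ≤ ∑ k ∈ T, (ν b) (weakArgmaxSet f k) := measure_biUnion_finset_le _ _
    _ ≤ ∑ k ∈ T, ENNReal.ofReal (Real.exp (t / b)) * (ν b) (strictArgmaxSet f' k) :=
        Finset.sum_le_sum fun k _ => pi_laplaceMeasure_weakArgmaxSet_le (h k)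
    _ = _ := by
        rw [← Finset.mul_sum, measure_biUnion_finset (pairwiseDisjoint_strictArgmaxSet f' _)
          fun k _ => measurableSet_strictArgmaxSet f' k]

variable {Ω β : Type*} [MeasurableSpace Ω] [MeasurableSpace β] {P : Measure Ω}
  [IsProbabilityMeasure P] {ξ ξ' : Ω → β} {B : Set β} {a : ℝ}

theorem measure_noisyArgmax_le {N : Ω → ι → ℝ} (hN : Measurable N) (hξ : Measurable ξ)
    (hξ' : Measurable ξ') (hlaw : P.map (fun ω => (N ω, ξ ω)) = (ν b).prod (P.map ξ))
    (hlaw' : P.map (fun ω => (N ω, ξ' ω)) = (ν b).prod (P.map ξ'))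
    {g : ι → β → ℝ} (hg : ∀ k, Measurable (g k)) (hB : MeasurableSet B)
    (hsens : ∀ v ∉ B, ∀ v' ∉ B, ∀ k l, (g k v - g k v') - (g l v - g l v') ≤ a)
    (T : Finset ι) :
    P {ω | ∃ k ∈ T, N ω ∈ weakArgmaxSet (g · (ξ ω)) k}
      ≤ ENNReal.ofReal (Real.exp (a / b)) * P {ω | ∃ k ∈ T, N ω ∈ strictArgmaxSet (g · (ξ' ω)) k}
        + (P (ξ ⁻¹' B) + P (ξ' ⁻¹' B)) := by
  have hb := pos_of_isProbabilityMeasure_laplaceMeasure (b := b)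
  have := Measure.isProbabilityMeasure_map (μ := P) hξ.aemeasurable
  have := Measure.isProbabilityMeasure_map (μ := P) hξ'.aemeasurable
  set C := {q : (ι → ℝ) × β | ∃ k ∈ T, q.1 ∈ weakArgmaxSet (g · q.2) k}
  set C' := {q : (ι → ℝ) × β | ∃ k ∈ T, q.1 ∈ strictArgmaxSet (g · q.2) k}
  have hC : MeasurableSet C := Measurable.setOf <| Measurable.exists fun k =>
    measurable_const.and (measurableSet_weakArgmaxSet_prod hg k).mem
  have hC' : MeasurableSet C' := Measurable.setOf <| Measurable.exists fun k =>
    measurable_const.and (measurableSet_strictArgmaxSet_prod hg k).mem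
  rw [← Measure.map_apply hξ hB, ← Measure.map_apply hξ' hB]
  change P ((fun ω => (N ω, ξ ω)) ⁻¹' C) ≤ _ * P ((fun ω => (N ω, ξ' ω)) ⁻¹' C') + _
  rw [← Measure.map_apply (hN.prodMk hξ) hC, ← Measure.map_apply (hN.prodMk hξ') hC', hlaw,
    hlaw']
  refine le_ofReal_exp_mul_add_of_forall_pos fun η hη => ?_
  refine Measure.prod_apply_le_of_slice_le hC hC' hB ENNReal.ofReal_ne_top
    fun v hv v' hv' => ?_
  have hsens' : ∀ k l, (g k v - g k v') - (g l v - g l v') < a + b * η := fun k l =>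
    (hsens v hv v' hv' k l).trans_lt (lt_add_of_pos_right a (mul_pos hb hη))
  have hscale : (a + b * η) / b = a / b + η := by field_simp
  have hCv : (·, v) ⁻¹' C = ⋃ k ∈ T, weakArgmaxSet (g · v) k := by ext; simp [C]
  have hCv' : (·, v') ⁻¹' C' = ⋃ k ∈ T, strictArgmaxSet (g · v') k := by ext; simp [C']
  rw [← hscale, hCv, hCv']
  exact pi_laplaceMeasure_biUnion_weakArgmaxSet_le hsens' T

end NoisyArgmax

theorem measure_noisyArgmax_mem_le {Ω : Type*} [MeasurableSpace Ω]
    {P : Measure Ω} [IsProbabilityMeasure P] {n : ℕ} (hn : 1 ≤ n) {a ε : ℝ}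
    {Z : ℕ → Ω → ℝ} (hZ : ∀ k, Measurable (Z k))
    (hZ_law : ∀ k ∈ Finset.Icc 1 n, P.map (Z k) = laplaceMeasure (a / ε))
    {ξ ξ' : Ω → ℝ} (hξ : Measurable ξ) (hξ' : Measurable ξ')
    (hindep : iIndepFun (Sum.elim (fun k : Fin n => Z (k + 1)) fun _ : Unit => ξ) P)
    (hindep' : iIndepFun (Sum.elim (fun k : Fin n => Z (k + 1)) fun _ : Unit => ξ') P)
    {F : ℕ → ℝ → ℝ} (hF : ∀ k, Measurable (F k)) {B : Set ℝ} (hB : MeasurableSet B)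
    (hsens : ∀ v ∉ B, ∀ v' ∉ B, ∀ k l, (F k v - F k v') - (F l v - F l v') ≤ a)
    {K K' : Ω → ℕ}
    (hK : ∀ ω, K ω ∈ Finset.Icc 1 n ∧ ∀ k ∈ Finset.Icc 1 n,
      F k (ξ ω) + Z k ω ≤ F (K ω) (ξ ω) + Z (K ω) ω)
    (hK' : ∀ ω, K' ω ∈ Finset.Icc 1 n ∧ ∀ k ∈ Finset.Icc 1 n,
      F k (ξ' ω) + Z k ω ≤ F (K' ω) (ξ' ω) + Z (K' ω) ω)
    (S : Set ℕ) :
    P {ω | K ω ∈ S}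
      ≤ ENNReal.ofReal (Real.exp ε) * P {ω | K' ω ∈ S} + (P (ξ ⁻¹' B) + P (ξ' ⁻¹' B)) := by
  classical
  have : IsProbabilityMeasure (laplaceMeasure (a / ε)) := by
    rw [← hZ_law 1 (Finset.mem_Icc.2 ⟨le_rfl, hn⟩)]
    exact Measure.isProbabilityMeasure_map (hZ 1).aemeasurable
  have ha : a ≠ 0 := fun h => by
    simpa [h] using pos_of_isProbabilityMeasure_laplaceMeasure (b := a / ε)
  have hZ_law' : ∀ k : Fin n, P.map (Z (k + 1)) = laplaceMeasure (a / ε) :=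
    fun k => hZ_law _ (by simp)
  let T := Finset.univ.filter fun k : Fin n => (k : ℕ) + 1 ∈ S
  calc P {ω | K ω ∈ S}
      ≤ P {ω | ∃ k ∈ T, (fun l : Fin n => Z (l + 1) ω)
          ∈ weakArgmaxSet (fun l : Fin n => F (l + 1) (ξ ω)) k} := by
        refine measure_mono fun ω hω => ?_
        obtain ⟨k, hk, hz⟩ := exists_fin_mem_weakArgmaxSet (hK ω)
        exact ⟨k, by simpa [T, hk] using hω, hz⟩
    _ ≤ ENNReal.ofReal (Real.exp (a / (a / ε))) * P {ω | ∃ k ∈ T, (fun l : Fin n => Z (l + 1) ω)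
          ∈ strictArgmaxSet (fun l : Fin n => F (l + 1) (ξ' ω)) k}
        + (P (ξ ⁻¹' B) + P (ξ' ⁻¹' B)) :=
      measure_noisyArgmax_le (measurable_pi_lambda _ fun k => hZ _) hξ hξ'
        (hindep.map_pi_prod_eq (fun _ => hZ _) hZ_law' hξ)
        (hindep'.map_pi_prod_eq (fun _ => hZ _) hZ_law' hξ')
        (fun k => hF _) hB (fun v hv v' hv' k l => hsens v hv v' hv' _ _) T
    _ ≤ _ := by
        rw [div_div_cancel₀ ha]
        refine add_le_add_left (mul_le_mul_right (measure_mono fun ω hω => ?_) _) _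
        obtain ⟨k, hk, hz⟩ := hω
        rw [Set.mem_ofPred_eq, eq_of_mem_strictArgmaxSet_fin (hK' ω) hz]
        exact (Finset.mem_filter.1 hk).2

lemma measure_preimage_sInf_AdeltaSet_lt_le {Ω : Type*} [MeasurableSpace Ω] {P : Measure Ω}
    {ζ : Ω → ℝ} (hζ : Measurable ζ) {P₀ P₁ Q : ℝ → ℝ} (hζ_law : P.map ζ = densityMeasure Q)
    (hQ : Q = P₀ ∨ Q = P₁) {δ : ℝ} (hne : (AdeltaSet P₀ P₁ δ).Nonempty)
    (hbdd : BddBelow (AdeltaSet P₀ P₁ δ)) :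
    P (ζ ⁻¹' {x | sInf (AdeltaSet P₀ P₁ δ) < 2 * |Real.log (P₁ x / P₀ x)|})
      ≤ ENNReal.ofReal (δ / 2) := by
  refine (Measure.le_map_apply hζ.aemeasurable _).trans ?_
  rw [hζ_law]
  refine measure_csInf_lt_le hne hbdd fun t ht => ?_
  rcases hQ with rfl | rfl
  exacts [ht.1.le, ht.2.le]

/-- The paper's `ℓ(k, X)` for the database `X = (x 1, …, x n)`. -/
noncomputable def partialLLR (P₀ P₁ : ℝ → ℝ) (n : ℕ) (x : ℕ → ℝ) (k : ℕ) : ℝ :=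
  ∑ m ∈ Finset.Icc k n, Real.log (P₁ (x m) / P₀ (x m))

lemma partialLLR_ite_sub_sub_le (P₀ P₁ : ℝ → ℝ) (n j : ℕ) (x : ℕ → ℝ) (v v' : ℝ) (k l : ℕ) :
    (partialLLR P₀ P₁ n (fun m => if m = j then v else x m) k
        - partialLLR P₀ P₁ n (fun m => if m = j then v' else x m) k)
      - (partialLLR P₀ P₁ n (fun m => if m = j then v else x m) l
        - partialLLR P₀ P₁ n (fun m => if m = j then v' else x m) l)
      ≤ |Real.log (P₁ v / P₀ v) - Real.log (P₁ v' / P₀ v')| :=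
  sum_ite_sub_sub_le _ _ (fun w => Real.log (P₁ w / P₀ w)) x j v v'

lemma measurable_partialLLR_ite {P₀ P₁ : ℝ → ℝ} (hP₀ : Measurable P₀) (hP₁ : Measurable P₁)
    (n j : ℕ) (x : ℕ → ℝ) (k : ℕ) :
    Measurable fun v => partialLLR P₀ P₁ n (fun m => if m = j then v else x m) k := by
  refine Finset.measurable_sum _ fun m _ => ?_
  by_cases hm : m = j <;> simp only [hm, if_true, if_false] <;> fun_prop

theorem offlinePCPD_relaxed_privacy_general
    {Ω : Type*} [MeasurableSpace Ω] (Prb : Measure Ω) [IsProbabilityMeasure Prb]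
    (P₀ P₁ : ℝ → ℝ) (hP₀ : IsDensity P₀) (hP₁ : IsDensity P₁)
    (ε δ : ℝ) (hδ : 0 < δ)
    (A : ℝ) (hSne : (AdeltaSet P₀ P₁ δ).Nonempty)
    (hSbdd : BddBelow (AdeltaSet P₀ P₁ δ))
    (hA : A = sInf (AdeltaSet P₀ P₁ δ))
    (n : ℕ) (hn : 1 ≤ n) (j : ℕ)
    (Pi Pi' : ℝ → ℝ) (hPi : Pi = P₀ ∨ Pi = P₁) (hPi' : Pi' = P₀ ∨ Pi' = P₁)
    (xfix : ℕ → ℝ)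
    (ξ ξ' : Ω → ℝ) (hξmeas : Measurable ξ) (hξ'meas : Measurable ξ')
    (Z : ℕ → Ω → ℝ) (hZmeas : ∀ k, Measurable (Z k))
    (hξlaw : Measure.map ξ Prb = densityMeasure Pi)
    (hξ'law : Measure.map ξ' Prb = densityMeasure Pi')
    (hZlaw : ∀ k ∈ Finset.Icc 1 n, Measure.map (Z k) Prb = laplaceMeasure (A / ε))
    (hindep : iIndepFun
        (Sum.elim (fun k : Fin n => Z ((k : ℕ) + 1)) (fun _ : Unit => ξ)) Prb)
    (hindep' : iIndepFun
        (Sum.elim (fun k : Fin n => Z ((k : ℕ) + 1)) (fun _ : Unit => ξ')) Prb)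
    (K K' : Ω → ℕ)
    (hK : ∀ ω, K ω ∈ Finset.Icc 1 n ∧ ∀ k ∈ Finset.Icc 1 n,
        (∑ m ∈ Finset.Icc k n,
            Real.log (P₁ (if m = j then ξ ω else xfix m)
              / P₀ (if m = j then ξ ω else xfix m))) + Z k ω
          ≤ (∑ m ∈ Finset.Icc (K ω) n,
              Real.log (P₁ (if m = j then ξ ω else xfix m)
                / P₀ (if m = j then ξ ω else xfix m))) + Z (K ω) ω)
    (hK' : ∀ ω, K' ω ∈ Finset.Icc 1 n ∧ ∀ k ∈ Finset.Icc 1 n,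
        (∑ m ∈ Finset.Icc k n,
            Real.log (P₁ (if m = j then ξ' ω else xfix m)
              / P₀ (if m = j then ξ' ω else xfix m))) + Z k ω
          ≤ (∑ m ∈ Finset.Icc (K' ω) n,
              Real.log (P₁ (if m = j then ξ' ω else xfix m)
                / P₀ (if m = j then ξ' ω else xfix m))) + Z (K' ω) ω)
    (S : Set ℕ) :
    Prb {ω | K ω ∈ S}
      ≤ ENNReal.ofReal (Real.exp ε) * Prb {ω | K' ω ∈ S} + ENNReal.ofReal δ := by
  let B := {v | A < 2 * |Real.log (P₁ v / P₀ v)|}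
  have hB : MeasurableSet B := measurableSet_lt measurable_const
    ((Real.measurable_log.comp (hP₁.measurable.div hP₀.measurable)).abs.const_mul 2)
  calc Prb {ω | K ω ∈ S}
      ≤ ENNReal.ofReal (Real.exp ε) * Prb {ω | K' ω ∈ S} + (Prb (ξ ⁻¹' B) + Prb (ξ' ⁻¹' B)) :=
      measure_noisyArgmax_mem_le hn hZmeas hZlaw hξmeas hξ'meas hindep hindep'
        (fun k => measurable_partialLLR_ite hP₀.measurable hP₁.measurable n j xfix k) hB
        (fun v hv v' hv' k l => (partialLLR_ite_sub_sub_le P₀ P₁ n j xfix v v' k l).trans <| by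
          simp only [B, Set.mem_ofPred_eq, not_lt] at hv hv'
          linarith [abs_sub (Real.log (P₁ v / P₀ v)) (Real.log (P₁ v' / P₀ v'))])
        hK hK' S
    _ ≤ ENNReal.ofReal (Real.exp ε) * Prb {ω | K' ω ∈ S}
        + (ENNReal.ofReal (δ / 2) + ENNReal.ofReal (δ / 2)) := by
      gcongr <;> simp only [B, hA]
      exacts [measure_preimage_sInf_AdeltaSet_lt_le hξmeas hξlaw hPi hSne hSbdd,
        measure_preimage_sInf_AdeltaSet_lt_le hξ'meas hξ'law hPi' hSne hSbdd]
    _ = ENNReal.ofReal (Real.exp ε) * Prb {ω | K' ω ∈ S} + ENNReal.ofReal δ := by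
      rw [← ENNReal.ofReal_add (by positivity) (by positivity), add_halves]

/-- Theorem 6 of the paper: the weaker privacy guarantee of
`OfflinePCPD` with parameter `δ > 0`.  The database `X_i` has its `j`-th entry drawn
from `P_i` (here `Pi`) and all other entries fixed to `xfix`; `X'_{i'}` has its `j`-th
entry an independent draw from `P_{i'}` (here `Pi'`).  With `Z_1,…,Z_n` i.i.d.
`Lap(A_δ/ε)` noise independent of the random entry, and `K, K'` selecting argmaxes of
the noisy log-likelihoods for the two databases, for every `S ⊆ {1,…,n}`:
`Pr[K ∈ S] ≤ e^ε · Pr[K' ∈ S] + δ`. -/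
theorem offlinePCPD_relaxed_privacy
    {Ω : Type*} [MeasurableSpace Ω] (Prb : Measure Ω) [IsProbabilityMeasure Prb]
    (P₀ P₁ : ℝ → ℝ) (hP₀ : IsDensity P₀) (hP₁ : IsDensity P₁)
    (ε δ : ℝ) (hε : 0 < ε) (hδ : 0 < δ)
    (A : ℝ) (hSne : (AdeltaSet P₀ P₁ δ).Nonempty)
    (hSbdd : BddBelow (AdeltaSet P₀ P₁ δ))
    (hA : A = sInf (AdeltaSet P₀ P₁ δ))
    (n : ℕ) (hn : 1 ≤ n) (j : ℕ) (hj : j ∈ Finset.Icc 1 n)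
    (Pi Pi' : ℝ → ℝ) (hPi : Pi = P₀ ∨ Pi = P₁) (hPi' : Pi' = P₀ ∨ Pi' = P₁)
    (xfix : ℕ → ℝ)
    (ξ ξ' : Ω → ℝ) (hξmeas : Measurable ξ) (hξ'meas : Measurable ξ')
    (Z : ℕ → Ω → ℝ) (hZmeas : ∀ k, Measurable (Z k))
    (hξlaw : Measure.map ξ Prb = densityMeasure Pi)
    (hξ'law : Measure.map ξ' Prb = densityMeasure Pi')
    (hZlaw : ∀ k ∈ Finset.Icc 1 n, Measure.map (Z k) Prb = laplaceMeasure (A / ε))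
    (hindep : iIndepFun
        (Sum.elim (fun k : Fin n => Z ((k : ℕ) + 1)) (fun _ : Unit => ξ)) Prb)
    (hindep' : iIndepFun
        (Sum.elim (fun k : Fin n => Z ((k : ℕ) + 1)) (fun _ : Unit => ξ')) Prb)
    (K K' : Ω → ℕ)
    (hK : ∀ ω, K ω ∈ Finset.Icc 1 n ∧ ∀ k ∈ Finset.Icc 1 n,
        (∑ m ∈ Finset.Icc k n,
            Real.log (P₁ (if m = j then ξ ω else xfix m)
              / P₀ (if m = j then ξ ω else xfix m))) + Z k ω
          ≤ (∑ m ∈ Finset.Icc (K ω) n,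
              Real.log (P₁ (if m = j then ξ ω else xfix m)
                / P₀ (if m = j then ξ ω else xfix m))) + Z (K ω) ω)
    (hK' : ∀ ω, K' ω ∈ Finset.Icc 1 n ∧ ∀ k ∈ Finset.Icc 1 n,
        (∑ m ∈ Finset.Icc k n,
            Real.log (P₁ (if m = j then ξ' ω else xfix m)
              / P₀ (if m = j then ξ' ω else xfix m))) + Z k ω
          ≤ (∑ m ∈ Finset.Icc (K' ω) n,
              Real.log (P₁ (if m = j then ξ' ω else xfix m)
                / P₀ (if m = j then ξ' ω else xfix m))) + Z (K' ω) ω)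
    (S : Set ℕ) :
    Prb {ω | K ω ∈ S}
      ≤ ENNReal.ofReal (Real.exp ε) * Prb {ω | K' ω ∈ S} + ENNReal.ofReal δ :=
  offlinePCPD_relaxed_privacy_general Prb P₀ P₁ hP₀ hP₁ ε δ hδ A hSne hSbdd hA n hn j Pi Pi' hPi
    hPi' xfix ξ ξ' hξmeas hξ'meas Z hZmeas hξlaw hξ'law hZlaw hindep hindep' K K' hK hK' S
end
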